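/- Suppose the vertex n has degree exactly k in the k-tree G(𝒯) (n is a leaf of G(𝒯)), and for 1 ≤ i ≤ n let T_kG_{n−1}^i be the subgraph of T_kG_n induced by the permutations p with p(n) = i. Then for any two distinct indices i ≠ j, the edges of T_kG_n joining a vertex of T_kG_{n−1}^i to a vertex of T_kG_{n−1}^j form a set of exactly k(n−2)! pairwise independent (vertex-disjoint) edges; in particular |N(T_kG_{n−1}^i) ∩ V(T_kG_{n−1}^j)| = k(n−2)!. -/

import Mathlib

/-!
An edge of `Cay(Sym(n), T)` between the copies `{p | p n = i}` and `{p | p n = j}` has the form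
`(u, u * (n a))` with `(n a) ∈ T`, `u n = i` and `u a = j`; so it is determined by its first
endpoint `u` (the neighbour `a` is `u⁻¹ j`), and symmetrically by its second. For each of the `k`
neighbours `a` of the leaf `n` there are `(n-2)!` permutations with `u n = i`, `u a = j`.
-/

/-- The transposition generating graph `G(𝒯)` of a set `T` of transpositions of `Sym(n)`:
vertices `{1,…,n}` (modeled as `Fin n`), with an edge `i j` iff the transposition
`(i j)` belongs to `T`. -/
def transGraph {n : ℕ} (T : Set (Equiv.Perm (Fin n))) : SimpleGraph (Fin n) :=
  SimpleGraph.fromRel (fun i j => Equiv.swap i j ∈ T)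

/-- The Cayley graph `Cay(Sym(n), T)`: vertices are permutations, and `g, h` are
adjacent iff `h = g * t` for some `t ∈ T`. -/
def cayley {n : ℕ} (T : Set (Equiv.Perm (Fin n))) : SimpleGraph (Equiv.Perm (Fin n)) :=
  SimpleGraph.fromRel (fun g h => ∃ t ∈ T, h = g * t)

/-- `G` is a `k`-tree: there is a construction ordering of the vertices in which the
first `k+1` vertices are mutually adjacent, and each later vertex is joined to exactly
`k` mutually adjacent earlier vertices. -/
def IsKTree (k : ℕ) {V : Type*} [Fintype V] (G : SimpleGraph V) : Prop :=
  k + 1 ≤ Fintype.card V ∧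
  ∃ e : Fin (Fintype.card V) ≃ V,
    (∀ i j : Fin (Fintype.card V), j < i → (i : ℕ) ≤ k → G.Adj (e i) (e j)) ∧
    ∀ i : Fin (Fintype.card V), k + 1 ≤ (i : ℕ) →
      {j : Fin (Fintype.card V) | j < i ∧ G.Adj (e i) (e j)}.ncard = k ∧
      {j : Fin (Fintype.card V) | j < i ∧ G.Adj (e i) (e j)}.Pairwise
        (fun j₁ j₂ => G.Adj (e j₁) (e j₂))

/-- `F` is an `R_k`-vertex-cut of `G`: `G - F` is disconnected and every vertex of
`G - F` has at least `k` neighbors in `G - F`. -/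
def IsRkCut {V : Type*} (G : SimpleGraph V) (k : ℕ) (F : Set V) : Prop :=
  ¬ (G.induce (Fᶜ : Set V)).Connected ∧
  ∀ v : V, v ∉ F → k ≤ {u : V | u ∉ F ∧ G.Adj v u}.ncard

/-- The `R_k`-vertex-connectivity `κ^k(G)`: the minimum cardinality of an
`R_k`-vertex-cut of `G`. -/
noncomputable def rkConn {V : Type*} (G : SimpleGraph V) (k : ℕ) : ℕ :=
  sInf {m : ℕ | ∃ F : Set V, IsRkCut G k F ∧ F.ncard = m}


open Equiv

namespace Equiv.Perm

variable {α : Type*} [DecidableEq α]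

theorem exists_apply_eq_and_apply_eq {a b i j : α} (hab : a ≠ b) (hij : i ≠ j) :
    ∃ u : Perm α, u a = i ∧ u b = j := by
  refine ⟨swap (swap a i b) j * swap a i, ?_, by simp⟩
  have hi : i ≠ swap a i b := fun h => hab (by simpa using congrArg (swap a i) h)
  simp [swap_apply_of_ne_of_ne hi hij]

variable [Fintype α]

theorem ncard_setOf_forall_mem_apply_eq_self (s : Finset α) :
    {v : Perm α | ∀ x ∈ s, v x = x}.ncard = (Fintype.card α - s.card).factorial := by
  have e : {v : Perm α | ∀ x ∈ s, v x = x} ≃ Perm {x // x ∉ s} :=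
    (Equiv.subtypeEquivRight fun v => by simp).trans
      (Perm.subtypeEquivSubtypePerm (· ∉ s)).symm
  rw [← Nat.card_coe_set_eq, Nat.card_congr e, Nat.card_eq_fintype_card, Fintype.card_perm,
    Fintype.card_subtype_compl, Fintype.card_coe]

theorem ncard_setOf_apply_eq_and_apply_eq {a b i j : α} (hab : a ≠ b) (hij : i ≠ j) :
    {u : Perm α | u a = i ∧ u b = j}.ncard = (Fintype.card α - 2).factorial := by
  obtain ⟨u₀, hu₀a, hu₀b⟩ := exists_apply_eq_and_apply_eq hab hij
  have : {u : Perm α | u a = i ∧ u b = j} =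
      (u₀ * ·) '' {v | ∀ x ∈ ({a, b} : Finset α), v x = x} := by
    ext u
    simp [Set.image_mul_left, ← hu₀a, ← hu₀b, Equiv.symm_apply_eq]
  rw [this, Set.ncard_image_of_injective _ (mul_right_injective u₀),
    ncard_setOf_forall_mem_apply_eq_self, Finset.card_pair hab]

end Equiv.Perm

variable {n : ℕ} {T : Set (Perm (Fin n))}

theorem transGraph_adj {a b : Fin n} : (transGraph T).Adj a b ↔ a ≠ b ∧ swap a b ∈ T := by
  rw [transGraph, SimpleGraph.fromRel_adj, swap_comm b a, or_self]

theorem cayley_adj_iff_of_isSwap (hT : ∀ t ∈ T, t.IsSwap) {g h : Perm (Fin n)} :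
    (cayley T).Adj g h ↔ ∃ t ∈ T, h = g * t := by
  have hinv : ∀ t ∈ T, t * t = 1 := fun t ht => by
    obtain ⟨x, y, -, rfl⟩ := hT t ht
    exact swap_mul_self x y
  rw [cayley, SimpleGraph.fromRel_adj]
  constructor
  · rintro ⟨-, ⟨t, ht, rfl⟩ | ⟨t, ht, rfl⟩⟩
    · exact ⟨t, ht, rfl⟩
    · exact ⟨t, ht, by rw [mul_assoc, hinv t ht, mul_one]⟩
  · rintro ⟨t, ht, rfl⟩
    obtain ⟨x, y, hxy, rfl⟩ := hT _ ht
    exact ⟨by simpa [swap_eq_one_iff] using hxy, Or.inl ⟨_, ht, rfl⟩⟩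

theorem cayley_adj_iff_of_apply_ne (hT : ∀ t ∈ T, t.IsSwap) {m : Fin n} {g h : Perm (Fin n)}
    (hgh : g m ≠ h m) :
    (cayley T).Adj g h ↔ ∃ a, (transGraph T).Adj m a ∧ h = g * swap m a := by
  rw [cayley_adj_iff_of_isSwap hT]
  constructor
  · rintro ⟨t, ht, rfl⟩
    obtain ⟨x, y, hxy, rfl⟩ := hT t ht
    have hm : swap x y m ≠ m := fun hm => hgh (by rw [Perm.mul_apply, hm])
    obtain ⟨-, rfl | rfl⟩ := swap_apply_ne_self_iff.mp hm
    · exact ⟨y, transGraph_adj.mpr ⟨hxy, ht⟩, rfl⟩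
    · exact ⟨x, transGraph_adj.mpr ⟨hxy.symm, swap_comm x m ▸ ht⟩, by rw [swap_comm]⟩
  · rintro ⟨a, hma, rfl⟩
    exact ⟨swap m a, (transGraph_adj.mp hma).2, rfl⟩

def crossEdges (T : Set (Perm (Fin n))) (m i j : Fin n) : Set (Perm (Fin n) × Perm (Fin n)) :=
  {e | e.1 m = i ∧ e.2 m = j ∧ (cayley T).Adj e.1 e.2}

theorem image_snd_crossEdges (m i j : Fin n) : Prod.snd '' crossEdges T m i j =
    {w : Perm (Fin n) | w m = j ∧ ∃ u : Perm (Fin n), u m = i ∧ (cayley T).Adj u w} := by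
  ext w
  simp only [crossEdges, Set.mem_image, Set.mem_ofPred_eq, Prod.exists, exists_eq_right]
  exact ⟨fun ⟨u, hu, h, hadj⟩ => ⟨h, u, hu, hadj⟩,
    fun ⟨h, u, hu, hadj⟩ => ⟨u, hu, h, hadj⟩⟩

theorem swap_mem_crossEdges {m i j : Fin n} {e : Perm (Fin n) × Perm (Fin n)} :
    e.swap ∈ crossEdges T m i j ↔ e ∈ crossEdges T m j i := by
  simp only [crossEdges, Set.mem_ofPred_eq, Prod.fst_swap, Prod.snd_swap, (cayley T).adj_comm]
  tauto

section

variable (hT : ∀ t ∈ T, t.IsSwap) {m i j : Fin n} (hij : i ≠ j)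
include hT hij

theorem mem_crossEdges_iff {e : Perm (Fin n) × Perm (Fin n)} :
    e ∈ crossEdges T m i j ↔
      ∃ a, (transGraph T).Adj m a ∧ e.1 m = i ∧ e.1 a = j ∧ e.2 = e.1 * swap m a := by
  constructor
  · rintro ⟨h1, h2, hadj⟩
    obtain ⟨a, hma, he⟩ := (cayley_adj_iff_of_apply_ne hT (by rw [h1, h2]; exact hij)).mp hadj
    exact ⟨a, hma, h1, by rw [← h2, he, Perm.mul_apply, swap_apply_left], he⟩
  · rintro ⟨a, hma, h1, h2, he⟩
    have h2' : e.2 m = j := by rw [he, Perm.mul_apply, swap_apply_left, h2]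
    exact ⟨h1, h2',
      (cayley_adj_iff_of_apply_ne hT (by rw [h1, h2']; exact hij)).mpr ⟨a, hma, he⟩⟩

theorem injOn_fst_crossEdges : (crossEdges T m i j).InjOn Prod.fst := by
  intro e₁ he₁ e₂ he₂ h
  obtain ⟨a₁, -, -, h₁, he₁⟩ := (mem_crossEdges_iff hT hij).mp he₁
  obtain ⟨a₂, -, -, h₂, he₂⟩ := (mem_crossEdges_iff hT hij).mp he₂
  obtain rfl : a₁ = a₂ := e₁.1.injective (by rw [h₁, h, h₂])
  exact Prod.ext h (by rw [he₁, he₂, h])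

theorem injOn_snd_crossEdges : (crossEdges T m i j).InjOn Prod.snd := fun _ he₁ _ he₂ h =>
  Prod.swap_injective <| injOn_fst_crossEdges hT hij.symm
    (swap_mem_crossEdges.mpr he₁) (swap_mem_crossEdges.mpr he₂) h

theorem crossEdges_eq_biUnion :
    crossEdges T m i j = ⋃ a ∈ (transGraph T).neighborSet m,
      (fun u => (u, u * swap m a)) '' {u | u m = i ∧ u a = j} := by
  ext e
  simp only [mem_crossEdges_iff hT hij, Set.mem_iUnion, Set.mem_image, Set.mem_ofPred_eq,
    SimpleGraph.mem_neighborSet, exists_prop]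
  constructor
  · rintro ⟨a, hma, h1, h2, he⟩
    exact ⟨a, hma, e.1, ⟨h1, h2⟩, Prod.ext rfl he.symm⟩
  · rintro ⟨a, hma, u, ⟨h1, h2⟩, rfl⟩
    exact ⟨a, hma, h1, h2, rfl⟩

theorem ncard_crossEdges :
    (crossEdges T m i j).ncard = ((transGraph T).neighborSet m).ncard * (n - 2).factorial := by
  rw [crossEdges_eq_biUnion hT hij, Set.toFinite _ |>.ncard_biUnion (fun _ _ => Set.toFinite _)]
  · have hcard : ∀ a ∈ (transGraph T).neighborSet m,
        ((fun u => (u, u * swap m a)) '' {u | u m = i ∧ u a = j}).ncard = (n - 2).factorial :=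
      fun a (hma : (transGraph T).Adj m a) => by
        rw [Set.ncard_image_of_injective _ fun _ _ h => congrArg Prod.fst h,
          Perm.ncard_setOf_apply_eq_and_apply_eq hma.ne hij, Fintype.card_fin]
    rw [finsum_mem_congr rfl hcard, ← finsum_one, finsum_mem_mul, one_mul]
  · rintro a - b - hab
    refine Set.disjoint_left.mpr ?_
    rintro _ ⟨u, ⟨-, hua⟩, rfl⟩ ⟨v, ⟨-, hvb⟩, he⟩
    obtain rfl : v = u := congrArg Prod.fst he
    exact hab (Equiv.injective _ (hua.trans hvb.symm))

end

/-- If the vertex `n` (the last vertex) is a leaf of the `k`-tree `G(𝒯)`, then for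
distinct indices `i ≠ j` the edges between the copies `T_kG_{n-1}^i` and `T_kG_{n-1}^j`
are exactly `k(n-2)!` in number and pairwise vertex-disjoint; in particular
`|N(T_kG_{n-1}^i) ∩ V(T_kG_{n-1}^j)| = k(n-2)!`. -/
theorem stmt4 (n k : ℕ) (hn : 1 ≤ n)
    (T : Set (Equiv.Perm (Fin n))) (hT : ∀ t ∈ T, Equiv.Perm.IsSwap t)
    (hleaf : ((transGraph T).neighborSet ⟨n - 1, by omega⟩).ncard = k)
    (i j : Fin n) (hij : i ≠ j) :
    {e : Equiv.Perm (Fin n) × Equiv.Perm (Fin n) |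
        e.1 ⟨n - 1, by omega⟩ = i ∧ e.2 ⟨n - 1, by omega⟩ = j ∧
        (cayley T).Adj e.1 e.2}.ncard = k * Nat.factorial (n - 2) ∧
    (∀ e₁ ∈ {e : Equiv.Perm (Fin n) × Equiv.Perm (Fin n) |
        e.1 ⟨n - 1, by omega⟩ = i ∧ e.2 ⟨n - 1, by omega⟩ = j ∧ (cayley T).Adj e.1 e.2},
     ∀ e₂ ∈ {e : Equiv.Perm (Fin n) × Equiv.Perm (Fin n) |
        e.1 ⟨n - 1, by omega⟩ = i ∧ e.2 ⟨n - 1, by omega⟩ = j ∧ (cayley T).Adj e.1 e.2},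
      e₁ ≠ e₂ → e₁.1 ≠ e₂.1 ∧ e₁.2 ≠ e₂.2) ∧
    {w : Equiv.Perm (Fin n) | w ⟨n - 1, by omega⟩ = j ∧
        ∃ u : Equiv.Perm (Fin n), u ⟨n - 1, by omega⟩ = i ∧
          (cayley T).Adj u w}.ncard = k * Nat.factorial (n - 2) := by
  have hcard : (crossEdges T ⟨n - 1, by omega⟩ i j).ncard = k * (n - 2).factorial := by
    rw [ncard_crossEdges hT hij, hleaf]
  refine ⟨hcard, fun e₁ he₁ e₂ he₂ hne => ⟨?_, ?_⟩, ?_⟩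
  · exact fun h => hne (injOn_fst_crossEdges hT hij he₁ he₂ h)
  · exact fun h => hne (injOn_snd_crossEdges hT hij he₁ he₂ h)
  · rw [← image_snd_crossEdges, (injOn_snd_crossEdges hT hij).ncard_image, hcard]
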